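/- Let $m\ge0$, $n\ge1$ be integers, $a>0$, $b>0$ reals and $s\in[0,a)$. Set $\mu_s=\dfrac{(1+a)^n a^m b+n I_{m,n-1,s}(a)}{I_{m,n,s}(a)}$ and $\tilde\psi_s(x)=\dfrac{\mu_s I_{m,n,s}(x)-n I_{m,n-1,s}(x)}{(1+x)^n x^m}$ for $x\in(0,a]$. Then the following are equivalent: (1) $\mu_s(1+s)\ge n$; (2) $\tilde\psi_s(x)>0$ for all $x\in(s,a]$; (3) $\tilde\psi_s'(x)>0$ for all $x\in(s,a]$. -/

import Mathlib

/-- Oriented integral `I_{m,n,s}(x) = ∫_s^x tᵐ(1+t)ⁿ dt`. -/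
noncomputable def Imns (m n : ℕ) (s x : ℝ) : ℝ := ∫ t in s..x, t ^ m * (1 + t) ^ n

/-- The slope `μ_s = ((1+a)ⁿ aᵐ b + n I_{m,n-1,s}(a)) / I_{m,n,s}(a)`. -/
noncomputable def muS (m n : ℕ) (a b s : ℝ) : ℝ :=
  ((1 + a) ^ n * a ^ m * b + (n : ℝ) * Imns m (n - 1) s a) / Imns m n s a

/-- The solution `ψ̃_s(x) = (μ_s I_{m,n,s}(x) - n I_{m,n-1,s}(x)) / ((1+x)ⁿ xᵐ)` of the
ODE `ψ' + ψ (n/(1+x) + m/x) = μ_s - n/(1+x)` with `ψ(s) = 0`, `ψ(a) = b`. -/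
noncomputable def psiS (m n : ℕ) (a b s x : ℝ) : ℝ :=
  (muS m n a b s * Imns m n s x - (n : ℝ) * Imns m (n - 1) s x) / ((1 + x) ^ n * x ^ m)

open Set intervalIntegral

lemma contI (m n : ℕ) : Continuous (fun t : ℝ => t ^ m * (1 + t) ^ n) := by continuity

lemma hasDerivAt_Imns (m n : ℕ) (s x : ℝ) :
    HasDerivAt (fun y => Imns m n s y) (x ^ m * (1 + x) ^ n) x :=
  integral_hasDerivAt_right ((contI m n).intervalIntegrable _ _)
    ((contI m n).stronglyMeasurableAtFilter _ _) (contI m n).continuousAt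

lemma Imns_pos (m n : ℕ) {s x : ℝ} (hs : 0 ≤ s) (h : s < x) : 0 < Imns m n s x := by
  apply intervalIntegral_pos_of_pos_on ((contI m n).intervalIntegrable _ _) _ h
  intro t ht
  have h0 : 0 < t := lt_of_le_of_lt hs ht.1
  positivity

noncomputable def Ff (m k : ℕ) (a b s x : ℝ) : ℝ :=
  muS m (k+1) a b s * Imns m (k+1) s x - (k+1 : ℝ) * Imns m k s x

noncomputable def Fd (m k : ℕ) (a b s x : ℝ) : ℝ :=
  x ^ m * (1 + x) ^ k * (muS m (k+1) a b s * (1 + x) - (k+1 : ℝ))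

noncomputable def Gg (m k : ℕ) (x : ℝ) : ℝ := (1 + x) ^ (k+1) * x ^ m

noncomputable def Hh (m k : ℕ) (a b s x : ℝ) : ℝ :=
  Fd m k a b s x - Ff m k a b s x * ((k+1 : ℝ) / (1 + x) + (m : ℝ) / x)

lemma psiS_eq (m k : ℕ) (a b s x : ℝ) :
    psiS m (k+1) a b s x = Ff m k a b s x / Gg m k x := by
  simp only [psiS, Ff, Gg, Nat.add_sub_cancel]
  push_cast
  ring_nf

lemma mu_pos (m k : ℕ) {a s : ℝ} (b : ℝ) (hb : 0 < b) (hs0 : 0 ≤ s) (hsa : s < a) :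
    0 < muS m (k+1) a b s := by
  have h1 : 0 < Imns m (k+1) s a := Imns_pos _ _ hs0 hsa
  have h2 : 0 < Imns m k s a := Imns_pos _ _ hs0 hsa
  have ha : 0 < a := lt_of_le_of_lt hs0 hsa
  have h3 : (0:ℝ) < 1 + a := by linarith
  apply div_pos _ h1
  have : (0:ℝ) < (1+a)^(k+1) * a^m * b := by positivity
  push_cast
  positivity

lemma Ff_s (m k : ℕ) (a b s : ℝ) : Ff m k a b s s = 0 := by
  simp [Ff, Imns, intervalIntegral.integral_same]

lemma hasDerivAt_Ff (m k : ℕ) (a b s x : ℝ) :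
    HasDerivAt (fun y => Ff m k a b s y) (Fd m k a b s x) x := by
  have h1 := (hasDerivAt_Imns m (k+1) s x).const_mul (muS m (k+1) a b s)
  have h2 := (hasDerivAt_Imns m k s x).const_mul ((k+1 : ℝ))
  have := h1.sub h2
  refine this.congr_deriv ?_
  simp only [Fd]
  ring

lemma cast_mul_pow_pred (m : ℕ) {x : ℝ} (hx : x ≠ 0) :
    (m : ℝ) * x ^ (m - 1) = (m : ℝ) * x ^ m / x := by
  cases m with
  | zero => simp
  | succ j =>
    simp only [Nat.add_sub_cancel, pow_succ]
    field_simp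

lemma hasDerivAt_Gg (m k : ℕ) {x : ℝ} (hx : 0 < x) :
    HasDerivAt (fun y => Gg m k y) (Gg m k x * ((k+1 : ℝ) / (1 + x) + (m : ℝ) / x)) x := by
  have hx1 : (0:ℝ) < 1 + x := by linarith
  have h1 : HasDerivAt (fun y : ℝ => (1 + y) ^ (k+1)) ((k+1 : ℝ) * (1 + x) ^ k) x := by
    have := ((hasDerivAt_id x).const_add 1).pow (k+1)
    exact this.congr_deriv (by simp)
  have h2 : HasDerivAt (fun y : ℝ => y ^ m) ((m : ℝ) * x ^ (m - 1)) x := by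
    simpa using hasDerivAt_pow m x
  have := h1.mul h2
  refine this.congr_deriv ?_
  rw [cast_mul_pow_pred m hx.ne']
  simp only [Gg]
  field_simp
  ring

lemma hasDerivAt_psi (m k : ℕ) (a b s : ℝ) {x : ℝ} (hx : 0 < x) :
    HasDerivAt (fun y => psiS m (k+1) a b s y) (Hh m k a b s x / Gg m k x) x := by
  have hx1 : (0:ℝ) < 1 + x := by linarith
  have hG : Gg m k x ≠ 0 := by simp only [Gg]; positivity
  have h := (hasDerivAt_Ff m k a b s x).div (hasDerivAt_Gg m k hx) hG
  have heq : ∀ y, psiS m (k+1) a b s y = Ff m k a b s y / Gg m k y := psiS_eq m k a b s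
  rw [show (fun y => psiS m (k+1) a b s y) = fun y => Ff m k a b s y / Gg m k y from funext heq]
  refine h.congr_deriv ?_
  simp only [Hh]
  field_simp

lemma hasDerivAt_Hh (m k : ℕ) (a b s : ℝ) {x : ℝ} (hx : 0 < x) :
    HasDerivAt (fun y => Hh m k a b s y)
      ((k+1 : ℝ) * x ^ m * (1 + x) ^ k / (1 + x)
        + Ff m k a b s x * ((k+1 : ℝ) / (1 + x) ^ 2 + (m : ℝ) / x ^ 2)) x := by
  have hx1 : (0:ℝ) < 1 + x := by linarith
  set μ := muS m (k+1) a b s with hμ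
  -- derivative of Fd
  have hu : HasDerivAt (fun y : ℝ => y ^ m * (1 + y) ^ k)
      ((m : ℝ) * x ^ (m-1) * (1 + x) ^ k + x ^ m * ((k : ℝ) * (1 + x) ^ (k-1))) x := by
    have h2 : HasDerivAt (fun y : ℝ => y ^ m) ((m : ℝ) * x ^ (m - 1)) x := by
      simpa using hasDerivAt_pow m x
    have h1 : HasDerivAt (fun y : ℝ => (1 + y) ^ k) ((k : ℝ) * (1 + x) ^ (k-1)) x := by
      have := ((hasDerivAt_id x).const_add 1).pow k
      exact this.congr_deriv (by simp)
    exact h2.mul h1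
  have hv : HasDerivAt (fun y : ℝ => μ * (1 + y) - (k+1 : ℝ)) μ x := by
    have := ((hasDerivAt_id x).const_add 1).const_mul μ
    simpa using this.sub_const (k+1 : ℝ)
  have hFd : HasDerivAt (fun y => Fd m k a b s y)
      (((m : ℝ) * x ^ (m-1) * (1 + x) ^ k + x ^ m * ((k : ℝ) * (1 + x) ^ (k-1)))
          * (μ * (1 + x) - (k+1 : ℝ)) + x ^ m * (1 + x) ^ k * μ) x := by
    have := hu.mul hv
    exact this
  -- derivative of q
  have hq1 : HasDerivAt (fun y : ℝ => (k+1 : ℝ) / (1 + y)) (-((k+1 : ℝ) / (1 + x) ^ 2)) x := by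
    have h0 : HasDerivAt (fun y : ℝ => 1 + y) 1 x := (hasDerivAt_id x).const_add 1
    have := (h0.inv hx1.ne').const_mul (k+1 : ℝ)
    simp only [div_eq_mul_inv]
    refine this.congr_deriv ?_
    field_simp
  have hq2 : HasDerivAt (fun y : ℝ => (m : ℝ) / y) (-((m : ℝ) / x ^ 2)) x := by
    have := ((hasDerivAt_id x).inv hx.ne').const_mul (m : ℝ)
    simp only [div_eq_mul_inv]
    refine this.congr_deriv ?_
    simp only [id_eq]
    field_simp
  have hq := hq1.add hq2
  have hF := hasDerivAt_Ff m k a b s x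
  have h := hFd.sub (hF.mul hq)
  refine h.congr_deriv ?_
  rw [cast_mul_pow_pred m hx.ne', cast_mul_pow_pred k hx1.ne']
  simp only [Fd, ← hμ, Pi.add_apply]
  field_simp
  ring

section main
variable {m k : ℕ} {a b s : ℝ}

lemma Ff_pos (hb : 0 < b) (hs0 : 0 ≤ s) (hsa : s < a)
    (hC : (k+1 : ℝ) ≤ muS m (k+1) a b s * (1 + s)) :
    ∀ x ∈ Ioc s a, 0 < Ff m k a b s x := by
  have hμ : 0 < muS m (k+1) a b s := mu_pos m k b hb hs0 hsa
  have hmono : StrictMonoOn (fun y => Ff m k a b s y) (Icc s a) := by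
    apply strictMonoOn_of_deriv_pos (convex_Icc s a)
    · exact fun x _ => ((hasDerivAt_Ff m k a b s x).differentiableAt).continuousAt.continuousWithinAt
    · intro x hx
      rw [interior_Icc] at hx
      rw [(hasDerivAt_Ff m k a b s x).deriv]
      have hx0 : 0 < x := lt_of_le_of_lt hs0 hx.1
      have hx1 : (0:ℝ) < 1 + x := by linarith
      have hB : (k+1 : ℝ) < muS m (k+1) a b s * (1 + x) := by
        calc (k+1 : ℝ) ≤ muS m (k+1) a b s * (1 + s) := hC
        _ < muS m (k+1) a b s * (1 + x) := by
            apply mul_lt_mul_of_pos_left _ hμ; linarith [hx.1]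
      have : (0:ℝ) < muS m (k+1) a b s * (1 + x) - (k+1 : ℝ) := by linarith
      simp only [Fd]
      positivity
  intro x hx
  have := hmono (left_mem_Icc.mpr (le_of_lt hsa)) ⟨le_of_lt hx.1, hx.2⟩ hx.1
  simpa [Ff_s] using this

lemma psi_pos (hb : 0 < b) (hs0 : 0 ≤ s) (hsa : s < a)
    (hC : (k+1 : ℝ) ≤ muS m (k+1) a b s * (1 + s)) :
    ∀ x ∈ Ioc s a, 0 < psiS m (k+1) a b s x := by
  intro x hx
  have hx0 : 0 < x := lt_of_le_of_lt hs0 hx.1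
  have hx1 : (0:ℝ) < 1 + x := by linarith
  rw [psiS_eq]
  apply div_pos (Ff_pos hb hs0 hsa hC x hx)
  simp only [Gg]; positivity

end main

section main2
variable {m k : ℕ} {a b s : ℝ}

lemma exists_neg (hb : 0 < b) (hs0 : 0 ≤ s) (hsa : s < a)
    (hnC : muS m (k+1) a b s * (1 + s) < (k+1 : ℝ)) :
    ∃ x1 ∈ Ioc s a, muS m (k+1) a b s * (1 + x1) < (k+1 : ℝ) ∧
      psiS m (k+1) a b s x1 < 0 := by
  have hμ : 0 < muS m (k+1) a b s := mu_pos m k b hb hs0 hsa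
  set μ := muS m (k+1) a b s with hμdef
  set r : ℝ := (k+1 : ℝ) / μ - 1 with hr
  have hsr : s < r := by
    rw [hr, lt_sub_iff_add_lt, lt_div_iff₀ hμ]
    nlinarith [hnC]
  clear_value r
  set x1 : ℝ := min a ((s + r)/2) with hx1def
  have hsx1 : s < x1 := lt_min hsa (by linarith)
  have hx1a : x1 ≤ a := min_le_left _ _
  have hx1r : x1 < r := lt_of_le_of_lt (min_le_right _ _) (by linarith)
  have hμx1 : μ * (1 + x1) < (k+1 : ℝ) := by
    have : 1 + x1 < (k+1 : ℝ)/μ := by rw [hr] at hx1r; linarith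
    calc μ * (1 + x1) < μ * ((k+1 : ℝ)/μ) := by exact mul_lt_mul_of_pos_left this hμ
    _ = (k+1 : ℝ) := by field_simp
  have hanti : StrictAntiOn (fun y => Ff m k a b s y) (Icc s x1) := by
    apply strictAntiOn_of_deriv_neg (convex_Icc s x1)
    · exact fun x _ => ((hasDerivAt_Ff m k a b s x).differentiableAt).continuousAt.continuousWithinAt
    · intro x hx
      rw [interior_Icc] at hx
      rw [(hasDerivAt_Ff m k a b s x).deriv]
      have hx0 : 0 < x := lt_of_le_of_lt hs0 hx.1
      have hx1' : (0:ℝ) < 1 + x := by linarith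
      have hB : μ * (1 + x) < (k+1 : ℝ) := by
        have := mul_lt_mul_of_pos_left (show (1:ℝ) + x < 1 + x1 by linarith [hx.2]) hμ
        linarith
      simp only [Fd, ← hμdef]
      apply mul_neg_of_pos_of_neg
      · positivity
      · linarith
  have hFneg : Ff m k a b s x1 < 0 := by
    have := hanti (left_mem_Icc.mpr hsx1.le) (right_mem_Icc.mpr hsx1.le) hsx1
    simpa [Ff_s] using this
  have hx10 : 0 < x1 := lt_of_le_of_lt hs0 hsx1
  refine ⟨x1, ⟨hsx1, hx1a⟩, hμx1, ?_⟩
  rw [psiS_eq]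
  apply div_neg_of_neg_of_pos hFneg
  have : (0:ℝ) < 1 + x1 := by linarith
  simp only [Gg]; positivity

end main2

lemma contFd (m k : ℕ) (c : ℝ) : Continuous (fun t : ℝ => t ^ m * (1 + t) ^ k * (c * (1 + t) - (k+1 : ℝ))) := by
  continuity

lemma Ff_eq_integral (m k : ℕ) (a b s x : ℝ) :
    Ff m k a b s x = ∫ t in s..x, (t ^ m * (1 + t) ^ k * (muS m (k+1) a b s * (1 + t) - (k+1 : ℝ))) := by
  have h1 : IntervalIntegrable (fun t : ℝ => t ^ m * (1 + t) ^ (k+1)) MeasureTheory.volume s x :=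
    (contI m (k+1)).intervalIntegrable _ _
  have h2 : IntervalIntegrable (fun t : ℝ => t ^ m * (1 + t) ^ k) MeasureTheory.volume s x :=
    (contI m k).intervalIntegrable _ _
  simp only [Ff, Imns]
  rw [← intervalIntegral.integral_const_mul, ← intervalIntegral.integral_const_mul,
    ← intervalIntegral.integral_sub (h1.const_mul _) (h2.const_mul _)]
  apply intervalIntegral.integral_congr
  intro t _
  ring

section main3
variable {m k : ℕ} {a b s : ℝ}

lemma exists_Hh_nonneg (hb : 0 < b) (hs0 : 0 ≤ s) (hsa : s < a)
    (hC : (k+1 : ℝ) ≤ muS m (k+1) a b s * (1 + s)) {x : ℝ} (hx : x ∈ Ioc s a) :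
    ∃ y, s < y ∧ y < x ∧ 0 ≤ Hh m k a b s y := by
  have hμ : 0 < muS m (k+1) a b s := mu_pos m k b hb hs0 hsa
  set μ := muS m (k+1) a b s with hμdef
  clear_value μ
  have hBmono : ∀ {t u : ℝ}, s ≤ t → t ≤ u →
      (0 ≤ μ * (1 + t) - (k+1 : ℝ)) ∧ (μ * (1 + t) - (k+1:ℝ) ≤ μ * (1 + u) - (k+1:ℝ)) := by
    intro t u hst htu
    constructor
    · have : μ * (1 + s) ≤ μ * (1 + t) := mul_le_mul_of_nonneg_left (by linarith) hμ.le
      linarith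
    · have : μ * (1 + t) ≤ μ * (1 + u) := mul_le_mul_of_nonneg_left (by linarith) hμ.le
      linarith
  rcases eq_or_lt_of_le hs0 with hs0' | hspos
  · -- case s = 0
    subst hs0'
    obtain ⟨y, hydef⟩ : ∃ y : ℝ, y = min x (1/(k+1 : ℝ)) / 2 := ⟨_, rfl⟩
    have hk1 : (0:ℝ) < 1/(k+1 : ℝ) := by positivity
    have hx0 : 0 < x := hx.1
    have hy0 : 0 < y := by
      rw [hydef]; exact div_pos (lt_min hx0 hk1) two_pos
    have hyx : y < x := by
      rw [hydef]
      have := min_le_left x (1/(k+1:ℝ))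
      have hx0 : 0 < x := hx.1
      have h2 : min x (1/(k+1:ℝ)) > 0 := lt_min hx0 hk1
      linarith
    have hky : (k+1 : ℝ) * y ≤ 1 := by
      have h1 : y ≤ (1/(k+1:ℝ))/2 := by
        rw [hydef]
        have := min_le_right x (1/(k+1:ℝ))
        linarith
      rw [div_div] at h1
      rw [← le_div_iff₀' (by positivity : (0:ℝ) < (k+1:ℝ))]
      calc y ≤ 1/((k+1:ℝ)*2) := h1
        _ ≤ 1/(k+1:ℝ) := by
          apply div_le_div_of_nonneg_left zero_le_one (by positivity)
          nlinarith [(Nat.cast_nonneg k : (0:ℝ) ≤ k)]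
    have hy1 : (0:ℝ) < 1 + y := by linarith
    have hBy := (hBmono (le_of_lt hy0) (le_refl y)).1
    have hFdy : 0 ≤ Fd m k a b 0 y := by
      simp only [Fd, ← hμdef]
      positivity
    have hFfle : Ff m k a b 0 y ≤ ((1+y)^k * (μ * (1+y) - (k+1:ℝ))) * (y^(m+1)/(m+1)) := by
      rw [Ff_eq_integral, ← hμdef]
      calc (∫ t in (0:ℝ)..y, t ^ m * (1 + t) ^ k * (μ * (1 + t) - (k+1 : ℝ)))
          ≤ ∫ t in (0:ℝ)..y, ((1+y)^k * (μ * (1+y) - (k+1:ℝ))) * t ^ m := by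
            apply intervalIntegral.integral_mono_on hy0.le
              ((contFd m k μ).intervalIntegrable _ _)
              ((continuous_const.mul (continuous_pow m)).intervalIntegrable _ _)
            intro t ht
            obtain ⟨ht1, ht2⟩ := ht
            have hBt := hBmono ht1 ht2
            have h1 : (1+t)^k * (μ * (1 + t) - (k+1 : ℝ))
                ≤ (1+y)^k * (μ * (1+y) - (k+1:ℝ)) :=
              mul_le_mul (pow_le_pow_left₀ (by linarith) (by linarith) k) hBt.2 hBt.1
                (by positivity)
            calc t ^ m * (1 + t) ^ k * (μ * (1 + t) - (k+1 : ℝ))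
                = t ^ m * ((1+t)^k * (μ * (1 + t) - (k+1 : ℝ))) := by ring
              _ ≤ t ^ m * ((1+y)^k * (μ * (1+y) - (k+1:ℝ))) :=
                  mul_le_mul_of_nonneg_left h1 (by positivity)
              _ = ((1+y)^k * (μ * (1+y) - (k+1:ℝ))) * t ^ m := by ring
        _ = ((1+y)^k * (μ * (1+y) - (k+1:ℝ))) * (y^(m+1)/(m+1)) := by
            rw [intervalIntegral.integral_const_mul, integral_pow]
            norm_num
    have hq0 : 0 ≤ (k+1 : ℝ)/(1+y) + (m : ℝ)/y := by positivity
    have hkey : y^(m+1) * ((k+1 : ℝ)/(1+y) + (m : ℝ)/y) ≤ (m+1 : ℝ) * y^m := by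
      have e1 : (k+1 : ℝ)/(1+y) + (m : ℝ)/y = ((k+1:ℝ)*y + m*(1+y))/(y*(1+y)) := by
        rw [div_add_div _ _ hy1.ne' hy0.ne', mul_comm (1+y) y]
        ring_nf
      rw [e1, mul_div_assoc', div_le_iff₀ (by positivity : (0:ℝ) < y*(1+y))]
      have hN : (k+1:ℝ)*y + m*(1+y) ≤ (m+1:ℝ)*(1+y) := by
        have : (0:ℝ) ≤ m := Nat.cast_nonneg m
        nlinarith [hky, hy0.le]
      calc y^(m+1) * ((k+1:ℝ)*y + m*(1+y)) = (y^m * y) * ((k+1:ℝ)*y + m*(1+y)) := by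
            rw [pow_succ]
        _ ≤ (y^m * y) * ((m+1:ℝ)*(1+y)) := mul_le_mul_of_nonneg_left hN (by positivity)
        _ = (m+1:ℝ) * y^m * (y * (1+y)) := by ring
    refine ⟨y, hy0, hyx, ?_⟩
    simp only [Hh, ← hμdef]
    have hC1 : (0:ℝ) ≤ (1+y)^k * (μ * (1+y) - (k+1:ℝ)) := by positivity
    have hfinal : Ff m k a b 0 y * ((k+1 : ℝ)/(1+y) + (m : ℝ)/y) ≤ Fd m k a b 0 y := by
      calc Ff m k a b 0 y * ((k+1 : ℝ)/(1+y) + (m : ℝ)/y)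
          ≤ (((1+y)^k * (μ * (1+y) - (k+1:ℝ))) * (y^(m+1)/(m+1))) * ((k+1 : ℝ)/(1+y) + (m : ℝ)/y) :=
            mul_le_mul_of_nonneg_right hFfle hq0
        _ = ((1+y)^k * (μ * (1+y) - (k+1:ℝ))) * ((y^(m+1) * ((k+1 : ℝ)/(1+y) + (m : ℝ)/y))/(m+1)) := by
            ring
        _ ≤ ((1+y)^k * (μ * (1+y) - (k+1:ℝ))) * (((m+1:ℝ) * y^m)/(m+1)) := by
            apply mul_le_mul_of_nonneg_left _ hC1
            exact div_le_div_of_nonneg_right hkey (by positivity)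
        _ = Fd m k a b 0 y := by
            simp only [Fd, ← hμdef]
            have : (m:ℝ)+1 ≠ 0 := by positivity
            field_simp
    linarith
  · -- case 0 < s
    obtain ⟨Q, hQdef⟩ : ∃ Q : ℝ, Q = (k+1 : ℝ) + (m : ℝ)/s := ⟨_, rfl⟩
    have hQ0 : 0 ≤ Q := by rw [hQdef]; positivity
    obtain ⟨y, hydef⟩ : ∃ y : ℝ, y = min ((s+x)/2) (s + 1/(Q+1)) := ⟨_, rfl⟩
    have hQ1 : (0:ℝ) < 1/(Q+1) := by positivity
    have hsy : s < y := by
      rw [hydef]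
      exact lt_min (by linarith [hx.1]) (by linarith)
    have hyx : y < x := by
      rw [hydef]
      exact lt_of_le_of_lt (min_le_left _ _) (by linarith [hx.1])
    have hy0 : 0 < y := lt_trans hspos hsy
    have hy1 : (0:ℝ) < 1 + y := by linarith
    have hys : y - s ≤ 1/(Q+1) := by
      have h := min_le_right ((s+x)/2) (s + 1/(Q+1))
      rw [← hydef] at h
      linarith
    have hFdy : 0 ≤ Fd m k a b s y := by
      have := (hBmono (le_of_lt hsy) (le_refl y)).1
      simp only [Fd, ← hμdef]
      positivity
    have hFfle : Ff m k a b s y ≤ (y - s) * Fd m k a b s y := by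
      rw [Ff_eq_integral, ← hμdef]
      have hint := intervalIntegral.integral_const (a := s) (b := y) (Fd m k a b s y)
      calc (∫ t in s..y, t ^ m * (1 + t) ^ k * (μ * (1 + t) - (k+1 : ℝ)))
          ≤ ∫ _t in s..y, Fd m k a b s y := by
            apply intervalIntegral.integral_mono_on hsy.le
              ((contFd m k μ).intervalIntegrable _ _) intervalIntegrable_const
            intro t ht
            obtain ⟨ht1, ht2⟩ := ht
            have ht0 : 0 < t := lt_of_lt_of_le hspos ht1
            have hA : t ^ m * (1+t) ^ k ≤ y ^ m * (1+y) ^ k := by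
              apply mul_le_mul (pow_le_pow_left₀ ht0.le ht2 m)
                (pow_le_pow_left₀ (by linarith) (by linarith) k) (by positivity) (by positivity)
            have hB := hBmono ht1 ht2
            simp only [Fd, ← hμdef]
            exact mul_le_mul hA hB.2 hB.1 (by positivity)
        _ = (y - s) * Fd m k a b s y := by rw [hint]; simp [smul_eq_mul]
    have hq0 : 0 ≤ (k+1 : ℝ)/(1+y) + (m : ℝ)/y := by positivity
    have hqQ : (k+1 : ℝ)/(1+y) + (m : ℝ)/y ≤ Q := by
      rw [hQdef]
      have h1 : (k+1 : ℝ)/(1+y) ≤ (k+1 : ℝ) := by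
        apply div_le_self (by positivity) (by linarith)
      have h2 : (m : ℝ)/y ≤ (m : ℝ)/s := by
        apply div_le_div_of_nonneg_left (by positivity) hspos hsy.le
      linarith
    have hkey : (y - s) * ((k+1 : ℝ)/(1+y) + (m : ℝ)/y) ≤ 1 := by
      calc (y - s) * ((k+1 : ℝ)/(1+y) + (m : ℝ)/y) ≤ (1/(Q+1)) * Q := by
            apply mul_le_mul hys hqQ hq0 (by positivity)
        _ ≤ 1 := by
            rw [div_mul_eq_mul_div, div_le_one (by positivity)]
            linarith
    refine ⟨y, hsy, hyx, ?_⟩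
    simp only [Hh, ← hμdef]
    have : Ff m k a b s y * ((k+1 : ℝ)/(1+y) + (m : ℝ)/y)
        ≤ Fd m k a b s y := by
      calc Ff m k a b s y * ((k+1 : ℝ)/(1+y) + (m : ℝ)/y)
          ≤ ((y - s) * Fd m k a b s y) * ((k+1 : ℝ)/(1+y) + (m : ℝ)/y) :=
            mul_le_mul_of_nonneg_right hFfle hq0
        _ = Fd m k a b s y * ((y - s) * ((k+1 : ℝ)/(1+y) + (m : ℝ)/y)) := by ring
        _ ≤ Fd m k a b s y * 1 := mul_le_mul_of_nonneg_left hkey hFdy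
        _ = Fd m k a b s y := mul_one _
    linarith

end main3

section main4
variable {m k : ℕ} {a b s : ℝ}

lemma Hh_mono (hb : 0 < b) (hs0 : 0 ≤ s) (hsa : s < a)
    (hC : (k+1 : ℝ) ≤ muS m (k+1) a b s * (1 + s)) :
    StrictMonoOn (fun y => Hh m k a b s y) (Ioc s a) := by
  apply strictMonoOn_of_deriv_pos (convex_Ioc s a)
  · intro x hx
    have hx0 : 0 < x := lt_of_le_of_lt hs0 hx.1
    exact (hasDerivAt_Hh m k a b s hx0).differentiableAt.continuousAt.continuousWithinAt
  · intro x hx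
    rw [interior_Ioc] at hx
    have hx0 : 0 < x := lt_of_le_of_lt hs0 hx.1
    have hx1 : (0:ℝ) < 1 + x := by linarith
    rw [(hasDerivAt_Hh m k a b s hx0).deriv]
    have hF : 0 < Ff m k a b s x := Ff_pos hb hs0 hsa hC x ⟨hx.1, hx.2.le⟩
    positivity

lemma deriv_psi_pos (hb : 0 < b) (hs0 : 0 ≤ s) (hsa : s < a)
    (hC : (k+1 : ℝ) ≤ muS m (k+1) a b s * (1 + s)) :
    ∀ x ∈ Ioc s a, 0 < deriv (fun y => psiS m (k+1) a b s y) x := by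
  intro x hx
  have hx0 : 0 < x := lt_of_le_of_lt hs0 hx.1
  have hx1 : (0:ℝ) < 1 + x := by linarith
  rw [(hasDerivAt_psi m k a b s hx0).deriv]
  apply div_pos _ (by simp only [Gg]; positivity)
  obtain ⟨y, hsy, hyx, hHy⟩ := exists_Hh_nonneg hb hs0 hsa hC hx
  have := Hh_mono hb hs0 hsa hC (show y ∈ Ioc s a from ⟨hsy, le_trans hyx.le hx.2⟩) hx hyx
  simp only at this
  linarith

lemma psi_lower (hb : 0 < b) (hs0 : 0 ≤ s) (hsa : s < a) {x1 : ℝ} (hx1 : x1 ∈ Ioc s a)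
    {y : ℝ} (hsy : s < y) (hyx1 : y ≤ x1) :
    -((k+1 : ℝ) * (1+x1)^k) * (y - s) ≤ psiS m (k+1) a b s y := by
  have hμ : 0 < muS m (k+1) a b s := mu_pos m k b hb hs0 hsa
  set μ := muS m (k+1) a b s with hμdef
  clear_value μ
  have hy0 : 0 < y := lt_of_le_of_lt hs0 hsy
  have hy1 : (0:ℝ) < 1 + y := by linarith
  have hx10 : 0 < x1 := lt_of_le_of_lt hs0 hx1.1
  have hx11 : (0:ℝ) < 1 + x1 := by linarith
  set C0 : ℝ := (k+1 : ℝ) * (1+x1)^k with hC0def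
  have hC0 : 0 ≤ C0 := by rw [hC0def]; positivity
  clear_value C0
  have hFfge : -(C0 * y^m) * (y - s) ≤ Ff m k a b s y := by
    rw [Ff_eq_integral, ← hμdef]
    have hint := intervalIntegral.integral_const (a := s) (b := y) (-(C0 * y^m))
    calc -(C0 * y^m) * (y - s)
        = ∫ _t in s..y, -(C0 * y^m) := by rw [hint]; simp [smul_eq_mul]; ring
      _ ≤ ∫ t in s..y, t ^ m * (1 + t) ^ k * (μ * (1 + t) - (k+1 : ℝ)) := by
          apply intervalIntegral.integral_mono_on hsy.le intervalIntegrable_const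
            ((contFd m k μ).intervalIntegrable _ _)
          intro t ht
          obtain ⟨ht1, ht2⟩ := ht
          have ht0 : 0 ≤ t := le_trans hs0 ht1
          have ht1' : (0:ℝ) < 1 + t := by linarith
          have hB : -(k+1 : ℝ) ≤ μ * (1 + t) - (k+1 : ℝ) := by nlinarith
          have hA0 : (0:ℝ) ≤ t ^ m * (1+t) ^ k := by positivity
          have hAle : t ^ m * (1+t) ^ k ≤ y ^ m * (1+x1) ^ k := by
            apply mul_le_mul (pow_le_pow_left₀ ht0 ht2 m)
              (pow_le_pow_left₀ (by linarith) (by linarith [le_trans ht2 hyx1]) k)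
              (by positivity) (by positivity)
          calc -(C0 * y^m) = (y ^ m * (1+x1) ^ k) * (-(k+1:ℝ)) := by
                rw [hC0def]; ring
            _ ≤ (t ^ m * (1+t) ^ k) * (-(k+1:ℝ)) := by
                apply mul_le_mul_of_nonpos_right hAle
                nlinarith [(Nat.cast_nonneg k : (0:ℝ) ≤ k)]
            _ ≤ (t ^ m * (1+t) ^ k) * (μ * (1 + t) - (k+1 : ℝ)) :=
                mul_le_mul_of_nonneg_left hB hA0
  rw [psiS_eq]
  have hGg : 0 < Gg m k y := by simp only [Gg]; positivity
  calc -C0 * (y - s) ≤ (-(C0 * y^m) * (y - s)) / Gg m k y := by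
        have e : (-(C0 * y^m) * (y - s)) / Gg m k y = (-C0 * (y-s)) / (1+y)^(k+1) := by
          simp only [Gg]
          field_simp
        rw [e, le_div_iff₀ (by positivity : (0:ℝ) < (1+y)^(k+1))]
        have hd : (1:ℝ) ≤ (1+y)^(k+1) := one_le_pow₀ (by linarith)
        nlinarith [mul_nonneg hC0 (by linarith : (0:ℝ) ≤ y - s)]
    _ ≤ Ff m k a b s y / Gg m k y := div_le_div_of_nonneg_right hFfge hGg.le

end main4

section main5
variable {m k : ℕ} {a b s : ℝ}

lemma exists_deriv_neg (hb : 0 < b) (hs0 : 0 ≤ s) (hsa : s < a)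
    (hnC : muS m (k+1) a b s * (1 + s) < (k+1 : ℝ)) :
    ∃ c ∈ Ioc s a, deriv (fun y => psiS m (k+1) a b s y) c < 0 := by
  obtain ⟨x1, hx1, hμx1, hψx1⟩ := exists_neg hb hs0 hsa hnC
  obtain ⟨δ, hδdef⟩ : ∃ δ : ℝ, δ = -psiS m (k+1) a b s x1 := ⟨_, rfl⟩
  have hδ : 0 < δ := by rw [hδdef]; linarith
  obtain ⟨C0, hC0def⟩ : ∃ C0 : ℝ, C0 = (k+1 : ℝ) * (1+x1)^k := ⟨_, rfl⟩
  have hx10 : 0 < x1 := lt_of_le_of_lt hs0 hx1.1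
  have hx11 : (0:ℝ) < 1 + x1 := by linarith
  have hC0 : 0 ≤ C0 := by rw [hC0def]; positivity
  obtain ⟨y, hydef⟩ : ∃ y : ℝ, y = min ((s+x1)/2) (s + δ/(C0+1)) := ⟨_, rfl⟩
  have hpos : 0 < δ/(C0+1) := by positivity
  have hsy : s < y := by
    rw [hydef]; exact lt_min (by linarith [hx1.1]) (by linarith)
  have hyx1 : y < x1 := by
    rw [hydef]; exact lt_of_le_of_lt (min_le_left _ _) (by linarith [hx1.1])
  have hys : y - s ≤ δ/(C0+1) := by
    have h := min_le_right ((s+x1)/2) (s + δ/(C0+1))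
    rw [← hydef] at h; linarith
  have hy0 : 0 < y := lt_of_le_of_lt hs0 hsy
  have hψy : psiS m (k+1) a b s x1 < psiS m (k+1) a b s y := by
    have hlow := psi_lower (m := m) (k := k) hb hs0 hsa hx1 hsy hyx1.le
    rw [← hC0def] at hlow
    have h1 : C0 * (y - s) ≤ C0 * (δ/(C0+1)) := mul_le_mul_of_nonneg_left hys hC0
    have h2 : C0 * (δ/(C0+1)) < δ := by
      rw [mul_div_assoc']
      rw [div_lt_iff₀ (by positivity : (0:ℝ) < C0+1)]
      nlinarith
    have : -δ < -(C0 * (y-s)) := by linarith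
    rw [hδdef] at this
    linarith
  have hcont : ContinuousOn (fun t => psiS m (k+1) a b s t) (Icc y x1) := by
    intro t ht
    have ht0 : 0 < t := lt_of_lt_of_le hy0 ht.1
    exact (hasDerivAt_psi m k a b s ht0).differentiableAt.continuousAt.continuousWithinAt
  have hderiv : ∀ t ∈ Ioo y x1, HasDerivAt (fun u => psiS m (k+1) a b s u)
      (Hh m k a b s t / Gg m k t) t := fun t ht =>
    hasDerivAt_psi m k a b s (lt_trans hy0 ht.1)
  obtain ⟨c, hc, hceq⟩ := exists_hasDerivAt_eq_slope (fun u => psiS m (k+1) a b s u)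
    (fun t => Hh m k a b s t / Gg m k t) hyx1 hcont hderiv
  refine ⟨c, ⟨lt_trans hsy hc.1, le_trans hc.2.le hx1.2⟩, ?_⟩
  rw [(hasDerivAt_psi m k a b s (lt_trans hy0 hc.1)).deriv, hceq]
  apply div_neg_of_neg_of_pos (by linarith) (by linarith [hyx1])

end main5


/-- Let `m ≥ 0`, `n ≥ 1` be integers, `a, b > 0` reals and `s ∈ [0,a)`. The following are
equivalent: (1) `μ_s(1+s) ≥ n`; (2) `ψ̃_s(x) > 0` for all `x ∈ (s,a]`;
(3) `ψ̃_s'(x) > 0` for all `x ∈ (s,a]`. -/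
theorem stmt_6 (m n : ℕ) (hn : 1 ≤ n) (a b : ℝ) (ha : 0 < a) (hb : 0 < b)
    (s : ℝ) (hs : s ∈ Set.Ico (0:ℝ) a) :
    ((n : ℝ) ≤ muS m n a b s * (1 + s) ↔
      ∀ x ∈ Set.Ioc s a, 0 < psiS m n a b s x) ∧
    ((n : ℝ) ≤ muS m n a b s * (1 + s) ↔
      ∀ x ∈ Set.Ioc s a, 0 < deriv (fun y => psiS m n a b s y) x) := by
  obtain ⟨hs0, hsa⟩ := hs
  obtain ⟨k, rfl⟩ : ∃ k, n = k + 1 := ⟨n - 1, (Nat.succ_pred_eq_of_pos hn).symm⟩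
  have hcast : ((k+1 : ℕ) : ℝ) = (k : ℝ) + 1 := by push_cast; ring
  rw [hcast]
  constructor
  · constructor
    · intro hC
      exact psi_pos hb hs0 hsa hC
    · intro h2
      by_contra hnC
      push_neg at hnC
      obtain ⟨x1, hx1, _, hψ⟩ := exists_neg hb hs0 hsa hnC
      exact absurd (h2 x1 hx1) (by linarith)
  · constructor
    · intro hC
      exact deriv_psi_pos hb hs0 hsa hC
    · intro h3
      by_contra hnC
      push_neg at hnC
      obtain ⟨c, hc, hd⟩ := exists_deriv_neg hb hs0 hsa hnC
      exact absurd (h3 c hc) (by linarith)
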